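/- arXiv:1008.3597 — 4 statements merged into one kernel-verified Lean document; each statement's English description precedes it below -/
import Mathlib

section
/- For m ≥ 2, (√m / (m-1)!)^(1/(m-1)) = e/m + O(1/m²) as m → ∞. -/
/-!
Write `sₘ` for Stirling's sequence `m! / (√(2m) (m/e)^m)`. Then
`√m / (m-1)! = (e/m)^(m-1) · e / (√2 sₘ)`, so the `(m-1)`-th root equals `e/m · cₘ^(1/(m-1))`
with `cₘ = e / (√2 sₘ) → e / √(2π) > 0`. A sequence with positive limit has `(m-1)`-th roots
`1 + O(1/m)`, whence the error `e/m · O(1/m)`.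
-/

open Filter Asymptotics Topology Real Stirling

open scoped Nat

lemma Filter.Tendsto.exp_sub_one_isBigO {α : Type*} {l : Filter α} {f : α → ℝ}
    (hf : Tendsto f l (𝓝 0)) : (fun x => Real.exp (f x) - 1) =O[l] f := by
  simpa [Function.comp_def] using ((hasDerivAt_exp 0).isBigO_sub).comp_tendsto hf

lemma Filter.Tendsto.rpow_sub_one_isBigO {α : Type*} {l : Filter α} {c g : α → ℝ} {L : ℝ}
    (hc : Tendsto c l (𝓝 L)) (hL : 0 < L) (hg : Tendsto g l (𝓝 0)) :
    (fun x => c x ^ g x - 1) =O[l] g := by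
  have hlog := hc.log hL.ne'
  have hprod : Tendsto (fun x => Real.log (c x) * g x) l (𝓝 0) := by simpa using hlog.mul hg
  have hexp : (fun x => Real.exp (Real.log (c x) * g x) - 1) =O[l] g :=
    hprod.exp_sub_one_isBigO.trans
      (((hlog.isBigO_one ℝ).mul (isBigO_refl g l)).congr_right (by simp))
  refine hexp.congr' ?_ EventuallyEq.rfl
  filter_upwards [hc.eventually_const_lt hL] with x hx
  rw [rpow_def_of_pos hx]

lemma one_div_natCast_sub_one_isBigO :
    (fun m : ℕ => 1 / ((m : ℝ) - 1)) =O[atTop] (fun m : ℕ => 1 / (m : ℝ)) := by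
  refine IsBigO.of_bound 2 ?_
  filter_upwards [eventually_ge_atTop 2] with m hm
  have hm : (2 : ℝ) ≤ m := by exact_mod_cast hm
  rw [norm_of_nonneg (one_div_nonneg.2 (by linarith)), norm_of_nonneg (by positivity),
    div_le_iff₀ (by linarith)]
  field_simp
  linarith

lemma sqrt_div_factorial_pred_eq {m : ℕ} (hm : m ≠ 0) :
    √m / (m - 1)! = (exp 1 / m) ^ (m - 1) * (exp 1 / (√2 * stirlingSeq m)) := by
  obtain ⟨n, rfl⟩ := Nat.exists_eq_add_one_of_ne_zero hm
  have hsqrt : √(2 * ((n + 1 : ℕ) : ℝ)) = √2 * √((n + 1 : ℕ) : ℝ) := sqrt_mul (by norm_num) _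
  rw [stirlingSeq, hsqrt, Nat.add_sub_cancel, Nat.factorial_succ, Nat.cast_mul, div_pow, pow_succ]
  field_simp
  rw [← mul_pow, mul_div_cancel₀ _ (exp_pos 1).ne']

lemma rpow_one_div_sqrt_div_factorial_pred_eq {m : ℕ} (hm : 2 ≤ m) :
    (√m / (m - 1)!) ^ ((1 : ℝ) / (m - 1))
      = exp 1 / m * (exp 1 / (√2 * stirlingSeq m)) ^ ((1 : ℝ) / (m - 1)) := by
  have hcast : ((m - 1 : ℕ) : ℝ) = m - 1 := Nat.cast_pred (by omega)
  have hs : 0 ≤ stirlingSeq m := by unfold stirlingSeq; positivity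
  rw [sqrt_div_factorial_pred_eq (by omega), mul_rpow (by positivity) (by positivity), one_div,
    ← hcast, pow_rpow_inv_natCast (by positivity) (by omega)]

/-- Asymptotic expansion: `(√m / (m-1)!)^(1/(m-1)) = e/m + O(1/m²)` as `m → ∞`. -/
theorem simplex_volume_root_asymptotics :
    (fun m : ℕ =>
        (Real.sqrt m / Nat.factorial (m - 1)) ^ ((1 : ℝ) / (m - 1))
          - Real.exp 1 / m)
      =O[atTop] (fun m : ℕ => 1 / (m : ℝ) ^ 2) := by
  have hexponent : Tendsto (fun m : ℕ => 1 / ((m : ℝ) - 1)) atTop (𝓝 0) :=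
    one_div_natCast_sub_one_isBigO.trans_tendsto tendsto_one_div_atTop_nhds_zero_nat
  have hlim : Tendsto (fun m => exp 1 / (√2 * stirlingSeq m)) atTop (𝓝 (exp 1 / (√2 * √π))) :=
    tendsto_const_nhds.div (tendsto_stirlingSeq_sqrt_pi.const_mul √2) (by positivity)
  have hroot := (hlim.rpow_sub_one_isBigO (by positivity) hexponent).trans
    one_div_natCast_sub_one_isBigO
  have hfactor : (fun m : ℕ => exp 1 / m) =O[atTop] (fun m : ℕ => 1 / (m : ℝ)) :=
    (isBigO_const_mul_self (exp 1) (fun m : ℕ => 1 / (m : ℝ)) atTop).congr_left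
      (by simp [div_eq_mul_inv])
  refine EventuallyEq.trans_isBigO ?_ ((hfactor.mul hroot).congr_right fun m => by ring)
  filter_upwards [eventually_ge_atTop 2] with m hm
  rw [rpow_one_div_sqrt_div_factorial_pred_eq hm]
  ring
end

section
/- For every p in the unit simplex Ω_m and every n ≥ 1, there exists a type q ∈ Q_n with ‖p − q‖_∞ ≤ (1/n)(1 − 1/m). -/
/-!
Scale `p` by `n`: the coordinates `x i = n * p i` are nonnegative and sum to `n`, so the fractional
parts of the `x i` sum to an integer `r < m`. Round every `x i` down and then up again in the `r`
coordinates with the largest fractional parts. Comparing `r` with the sum of the fractional parts,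
the coordinates rounded up have fractional part at least `1 / m` and the others at most `1 - 1 / m`,
so each `x i` moves by at most `1 - 1 / m`; dividing by `n` gives the type `q`.
-/

open Finset

section Rounding

variable {ι : Type*} [Fintype ι]

lemma exists_card_eq_forall_le_of_mem (f : ι → ℝ) {r : ℕ} (hr : r ≤ Fintype.card ι) :
    ∃ S : Finset ι, #S = r ∧ ∀ i ∈ S, ∀ j ∉ S, f j ≤ f i := by
  classical
  -- a set of size `r` maximising `∑ i ∈ S, f i` cannot gain by swapping `i ∈ S` for `j ∉ S`
  obtain ⟨S, hSmem, hSmax⟩ := exists_max_image (univ.powersetCard r) (fun s => ∑ i ∈ s, f i)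
    (powersetCard_nonempty.2 (by simpa using hr))
  have hS : #S = r := (mem_powersetCard.1 hSmem).2
  refine ⟨S, hS, fun i hi j hj => ?_⟩
  have hj' : j ∉ S.erase i := fun h => hj (mem_of_mem_erase h)
  have hswap := hSmax (insert j (S.erase i)) <| mem_powersetCard.2 ⟨subset_univ _, by
    rw [card_insert_of_notMem hj', card_erase_add_one hi, hS]⟩
  rw [sum_insert hj', sum_erase_eq_sub hi] at hswap
  linarith

lemma one_div_card_le_of_mem {f : ι → ℝ} (hf : ∀ i, f i ≤ 1) {S : Finset ι}
    (hsum : ∑ i, f i = #S) (hS : ∀ i ∈ S, ∀ j ∉ S, f j ≤ f i) {i : ι} (hi : i ∈ S) :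
    1 / Fintype.card ι ≤ f i := by
  classical
  have hrest : ∑ j ∈ S.erase i, f j ≤ #(S.erase i) := by
    simpa using sum_le_card_nsmul (S.erase i) f 1 fun j _ => hf j
  have hcompl : ∑ j ∈ Sᶜ, f j ≤ #Sᶜ * f i := by
    simpa using sum_le_card_nsmul Sᶜ f (f i) fun j hj => hS i hi j (mem_compl.1 hj)
  have hcardS : (#(S.erase i) : ℝ) + 1 = #S := by exact_mod_cast card_erase_add_one hi
  have hcard : (#S : ℝ) + #Sᶜ = Fintype.card ι := by exact_mod_cast card_add_card_compl S
  have hS1 : (1 : ℝ) ≤ #S := by exact_mod_cast card_pos.2 ⟨i, hi⟩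
  -- `#S = ∑ f ≤ f i + (#S - 1) + #Sᶜ * f i`
  have key : 1 ≤ (1 + #Sᶜ) * f i := by
    rw [← sum_add_sum_compl S, ← add_sum_erase S f hi] at hsum
    linarith
  have hfi : 0 < f i := pos_of_mul_pos_right (one_pos.trans_le key) (by positivity)
  rw [div_le_iff₀ (by linarith), mul_comm]
  exact key.trans (by gcongr; linarith)

lemma le_one_sub_one_div_card_of_notMem {f : ι → ℝ} (hf : ∀ i, 0 ≤ f i) {S : Finset ι}
    (hsum : ∑ i, f i = #S) (hS : ∀ i ∈ S, ∀ j ∉ S, f j ≤ f i) {j : ι} (hj : j ∉ S) :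
    f j ≤ 1 - 1 / Fintype.card ι := by
  classical
  have hcard : (#S : ℝ) + #Sᶜ = Fintype.card ι := by exact_mod_cast card_add_card_compl S
  have hsum' : ∑ i, (1 - f i) = #Sᶜ := by
    rw [sum_sub_distrib, hsum]
    simp only [sum_const, card_univ, nsmul_eq_mul, mul_one]
    linarith
  have hS' : ∀ i ∈ Sᶜ, ∀ k ∉ Sᶜ, 1 - f k ≤ 1 - f i := fun i hi k hk => by
    linarith [hS k (not_not.1 (mem_compl.not.1 hk)) i (mem_compl.1 hi)]
  linarith [one_div_card_le_of_mem (fun i => by linarith [hf i]) hsum' hS' (mem_compl.2 hj)]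

theorem exists_nat_round_sum_eq {x : ι → ℝ} (hx : ∀ i, 0 ≤ x i) {N : ℕ}
    (hN : ∑ i, x i = N) :
    ∃ k : ι → ℕ, ∑ i, k i = N ∧ ∀ i, |x i - k i| ≤ 1 - 1 / Fintype.card ι := by
  classical
  set f : ι → ℝ := fun i => x i - ⌊x i⌋₊ with hf
  have hf0 : ∀ i, 0 ≤ f i := fun i => sub_nonneg.2 (Nat.floor_le (hx i))
  have hf1 : ∀ i, f i ≤ 1 := fun i => by linarith [Nat.lt_floor_add_one (x i)]
  have hfloor : ∑ i, ⌊x i⌋₊ ≤ N := by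
    have : ∑ i, (⌊x i⌋₊ : ℝ) ≤ N := hN ▸ sum_le_sum fun i _ => Nat.floor_le (hx i)
    exact_mod_cast this
  have hr : ∑ i, f i = (N - ∑ i, ⌊x i⌋₊ : ℕ) := by
    rw [hf, sum_sub_distrib, hN, Nat.cast_sub hfloor, Nat.cast_sum]
  have hr_le : N - ∑ i, ⌊x i⌋₊ ≤ Fintype.card ι := by
    have : ∑ i, f i ≤ Fintype.card ι := by simpa using sum_le_card_nsmul univ f 1 fun i _ => hf1 i
    exact_mod_cast hr ▸ this
  obtain ⟨S, hS, hSmax⟩ := exists_card_eq_forall_le_of_mem f hr_le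
  rw [← hS] at hr
  refine ⟨fun i => ⌊x i⌋₊ + if i ∈ S then 1 else 0, ?_, fun i => ?_⟩
  · simp only [sum_add_distrib, sum_boole, filter_mem_eq_inter, univ_inter, Nat.cast_id]
    omega
  · by_cases hi : i ∈ S
    · have := one_div_card_le_of_mem hf1 hr hSmax hi
      simp only [hi, if_true, Nat.cast_add, Nat.cast_one, abs_le]
      constructor <;> linarith [hf1 i]
    · have := le_one_sub_one_div_card_of_notMem hf0 hr hSmax hi
      simp only [hi, if_false, add_zero, abs_le]
      constructor <;> linarith [hf0 i]

end Rounding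

theorem type_lattice_covers_general (m n : ℕ) (hn : 1 ≤ n)
    (p : Fin m → ℝ) (hp0 : ∀ i, 0 ≤ p i) (hp1 : ∑ i, p i = 1) :
    ∃ q : Fin m → ℝ,
      (∃ k : Fin m → ℕ, (∀ i, q i = (k i : ℝ) / n) ∧ ∑ i, k i = n) ∧
      ‖p - q‖ ≤ (1 / n) * (1 - 1 / m) := by
  have hn0 : (0 : ℝ) < n := by exact_mod_cast hn
  obtain ⟨k, hk, hround⟩ := exists_nat_round_sum_eq (x := fun i => n * p i)
    (fun i => mul_nonneg hn0.le (hp0 i)) (by rw [← mul_sum, hp1, mul_one])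
  refine ⟨fun i => k i / n, ⟨k, fun _ => rfl, hk⟩, ?_⟩
  have hm : (1 : ℝ) / m ≤ 1 := by simpa using Nat.cast_inv_le_one m
  refine (pi_norm_le_iff_of_nonneg (by positivity)).2 fun i => ?_
  have hcoord : p i - k i / n = (n * p i - k i) / n := by field_simp
  rw [Pi.sub_apply, Real.norm_eq_abs, hcoord, abs_div, abs_of_pos hn0, div_le_iff₀ hn0]
  calc |n * p i - k i| ≤ 1 - 1 / m := by simpa using hround i
    _ = 1 / n * (1 - 1 / m) * n := by field_simp

/-- For every `p` in the unit simplex `Ω_m` and every `n ≥ 1`, there is a type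
`q ∈ Q_n` with `‖p − q‖_∞ ≤ (1/n)(1 − 1/m)`.  Here `Fin m → ℝ` carries the
sup norm. -/
theorem type_lattice_covers (m n : ℕ) (hm : 1 ≤ m) (hn : 1 ≤ n)
    (p : Fin m → ℝ) (hp0 : ∀ i, 0 ≤ p i) (hp1 : ∑ i, p i = 1) :
    ∃ q : Fin m → ℝ,
      (∃ k : Fin m → ℕ, (∀ i, q i = (k i : ℝ) / n) ∧ ∑ i, k i = n) ∧
      ‖p - q‖ ≤ (1 / n) * (1 - 1 / m) :=
  type_lattice_covers_general m n hn p hp0 hp1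
end

section
/- The L∞ covering radius of the type lattice Q_n in the simplex Ω_m equals (1/n)(1 − 1/m); that is, max over p ∈ Ω_m of min over q ∈ Q_n of ‖p − q‖_∞ is exactly (1/n)(1 − 1/m), for m ≥ 2. -/
/-!
Scale by `n`: for `x = n • p`, with `x ≥ 0` and `∑ x = n`, we look for `k ∈ ℕ^m` with `∑ k = n`.
Start from `⌊x⌋`, whose errors `x - ⌊x⌋` all lie in `[0, 1)`, and distribute the missing
`n - ∑ ⌊x⌋` units greedily, one at a time, to a coordinate of largest error. This keeps all
pairwise differences of errors at most `1`, and errors `e` with `∑ e = 0` and pairwise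
differences at most `1` satisfy `m e_i = ∑_j (e_i - e_j) ≤ m - 1`. For the lower bound, take
`x = (n - 1) • δ₀ + (1/m) • 𝟙`: any `k` with `∑ k = n` must exceed `(n - 1) • δ₀` by at least
one in some coordinate, where it is then `1 - 1/m` above `x`.
-/

open Finset

theorem abs_sub_div_eq {n : ℝ} (hn : 0 < n) (y z : ℝ) : |y - z / n| = |n * y - z| / n := by
  rw [show y - z / n = (n * y - z) / n by field_simp, abs_div, abs_of_pos hn]

section Rounding

variable {ι : Type*} [Fintype ι]

theorem le_one_sub_inv_card_of_sum_eq_zero {e : ι → ℝ} (hsum : ∑ j, e j = 0)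
    (hgap : ∀ i j, e i ≤ e j + 1) (i : ι) : e i ≤ 1 - 1 / Fintype.card ι := by
  classical
  have hcard : (0 : ℝ) < Fintype.card ι := by exact_mod_cast Fintype.card_pos_iff.mpr ⟨i⟩
  have key : Fintype.card ι * e i ≤ Fintype.card ι - 1 :=
    calc Fintype.card ι * e i = ∑ j, (e i - e j) := by
          rw [sum_sub_distrib, hsum, sum_const, card_univ, nsmul_eq_mul, sub_zero]
      _ ≤ ∑ j, (1 - if j = i then 1 else 0) := by
          refine sum_le_sum fun j _ => ?_
          split_ifs with h
          · simp [h]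
          · linarith [hgap i j]
      _ = Fintype.card ι - 1 := by simp
  rw [le_sub_iff_add_le, ← le_sub_iff_add_le', div_le_iff₀ hcard]
  linarith

theorem abs_le_one_sub_inv_card_of_sum_eq_zero {e : ι → ℝ} (hsum : ∑ j, e j = 0)
    (hgap : ∀ i j, e i ≤ e j + 1) (i : ι) : |e i| ≤ 1 - 1 / Fintype.card ι :=
  abs_le'.mpr
    ⟨le_one_sub_inv_card_of_sum_eq_zero hsum hgap i,
      le_one_sub_inv_card_of_sum_eq_zero (e := -e) (by simp [hsum])
        (fun i j => by simpa [neg_le, add_comm] using hgap j i) i⟩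

theorem exists_nat_sum_eq_sub_gap_le_one [Nonempty ι] {e : ι → ℝ}
    (hgap : ∀ i j, e i ≤ e j + 1) (t : ℕ) :
    ∃ d : ι → ℕ, ∑ i, d i = t ∧ ∀ i j, e i - d i ≤ e j - d j + 1 := by
  classical
  induction t with
  | zero => exact ⟨0, by simp, by simpa using hgap⟩
  | succ t ih =>
    obtain ⟨d, hd, hdgap⟩ := ih
    obtain ⟨l, hl⟩ := Finite.exists_max fun i => e i - d i
    refine ⟨d + Pi.single l 1, by simp [sum_add_distrib, hd], fun i j => ?_⟩
    simp only [Pi.add_apply, Pi.single_apply, Nat.cast_add]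
    have := hdgap i j
    have := hl i
    split_ifs <;> subst_vars <;> push_cast <;> linarith

theorem exists_nat_sum_eq_abs_sub_le [Nonempty ι] {x : ι → ℝ} (hx : ∀ i, 0 ≤ x i) {n : ℕ}
    (hsum : ∑ i, x i = n) :
    ∃ k : ι → ℕ, ∑ i, k i = n ∧ ∀ i, |x i - k i| ≤ 1 - 1 / Fintype.card ι := by
  set k₀ : ι → ℕ := fun i => ⌊x i⌋₊
  have hfract : ∀ i, 0 ≤ x i - k₀ i ∧ x i - k₀ i < 1 := fun i =>
    ⟨sub_nonneg.mpr (Nat.floor_le (hx i)), by linarith [Nat.lt_floor_add_one (x i)]⟩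
  have hk₀ : ∑ i, k₀ i ≤ n := by
    have : ∑ i, (k₀ i : ℝ) ≤ n := hsum ▸ sum_le_sum fun i _ => Nat.floor_le (hx i)
    exact_mod_cast this
  obtain ⟨d, hd, hgap⟩ := exists_nat_sum_eq_sub_gap_le_one (e := fun i => x i - k₀ i)
    (fun i j => by linarith [hfract i, hfract j]) (n - ∑ i, k₀ i)
  have hk : ∑ i, (k₀ i + d i) = n := by rw [sum_add_distrib, hd]; omega
  refine ⟨fun i => k₀ i + d i, hk, fun i => ?_⟩
  have hk' : ∑ i, ((k₀ i + d i : ℕ) : ℝ) = n := by exact_mod_cast hk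
  refine abs_le_one_sub_inv_card_of_sum_eq_zero (e := fun i => x i - (k₀ i + d i : ℕ))
    (by rw [sum_sub_distrib, hsum, hk', sub_self]) (fun i j => ?_) i
  push_cast
  linarith [hgap i j]

theorem exists_le_abs_add_sub_of_sum_lt {a k : ι → ℕ} (h : ∑ i, a i < ∑ i, k i) (c : ℝ) :
    ∃ j, 1 - c ≤ |a j + c - k j| := by
  obtain ⟨j, -, hj⟩ := exists_lt_of_sum_lt h
  refine ⟨j, le_abs.mpr (Or.inr ?_)⟩
  have : (a j : ℝ) + 1 ≤ k j := by exact_mod_cast hj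
  linarith

theorem exists_type_norm_sub_le [Nonempty ι] {n : ℕ} (hn : 0 < n) {p : ι → ℝ}
    (hp : ∀ i, 0 ≤ p i) (hsum : ∑ i, p i = 1) :
    ∃ k : ι → ℕ, ∑ i, k i = n ∧
      ‖p - fun i => (k i : ℝ) / n‖ ≤ 1 / n * (1 - 1 / Fintype.card ι) := by
  have hn₀ : (0 : ℝ) < n := by exact_mod_cast hn
  obtain ⟨k, hk, hround⟩ := exists_nat_sum_eq_abs_sub_le (x := fun i => n * p i)
    (fun i => mul_nonneg hn₀.le (hp i)) (by rw [← mul_sum, hsum, mul_one])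
  refine ⟨k, hk, (pi_norm_le_iff_of_nonempty _).mpr fun i => ?_⟩
  rw [Pi.sub_apply, Real.norm_eq_abs, abs_sub_div_eq hn₀, one_div_mul_eq_div]
  gcongr
  exact hround i

theorem exists_forall_le_norm_sub_type [Nonempty ι] {n : ℕ} (hn : 0 < n) :
    ∃ p : ι → ℝ, (∀ i, 0 ≤ p i) ∧ ∑ i, p i = 1 ∧ ∀ k : ι → ℕ, ∑ i, k i = n →
      1 / n * (1 - 1 / Fintype.card ι) ≤ ‖p - fun i => (k i : ℝ) / n‖ := by
  classical
  have hn₀ : (0 : ℝ) < n := by exact_mod_cast hn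
  have hcard : (Fintype.card ι : ℝ) ≠ 0 := by exact_mod_cast Fintype.card_ne_zero
  set a : ι → ℕ := Pi.single (Classical.arbitrary ι) (n - 1)
  have ha : ∑ i, a i = n - 1 := by simp [a]
  refine ⟨fun i => (a i + 1 / Fintype.card ι) / n, fun i => by positivity, ?_, fun k hk => ?_⟩
  · rw [← sum_div, sum_add_distrib, ← Nat.cast_sum, ha, Nat.cast_sub hn]
    simp [hcard, hn₀.ne']
  obtain ⟨j, hj⟩ := exists_le_abs_add_sub_of_sum_lt (a := a) (k := k) (by omega)
    (1 / Fintype.card ι)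
  calc 1 / n * (1 - 1 / Fintype.card ι) ≤ |(a j : ℝ) + 1 / Fintype.card ι - k j| / n := by
        rw [one_div_mul_eq_div]; gcongr
    _ = ‖((fun i => ((a i : ℝ) + 1 / Fintype.card ι) / n) - fun i => (k i : ℝ) / n) j‖ := by
        rw [Pi.sub_apply, Real.norm_eq_abs, ← sub_div, abs_div, abs_of_pos hn₀]
    _ ≤ _ := norm_le_pi_norm _ j

end Rounding

/-- The L∞ covering radius of the type lattice `Q_n` in the simplex `Ω_m`
equals exactly `(1/n)(1 − 1/m)` for `m ≥ 2`: every point of the simplex is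
within that distance of some type, and some point of the simplex is at
distance at least that from every type.  `Fin m → ℝ` carries the sup norm. -/
theorem type_lattice_covering_radius_Linf (m n : ℕ) (hm : 2 ≤ m) (hn : 1 ≤ n) :
    (∀ p : Fin m → ℝ, (∀ i, 0 ≤ p i) → ∑ i, p i = 1 →
      ∃ q : Fin m → ℝ,
        (∃ k : Fin m → ℕ, (∀ i, q i = (k i : ℝ) / n) ∧ ∑ i, k i = n) ∧
        ‖p - q‖ ≤ (1 / n) * (1 - 1 / m)) ∧
    (∃ p : Fin m → ℝ, (∀ i, 0 ≤ p i) ∧ ∑ i, p i = 1 ∧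
      ∀ q : Fin m → ℝ,
        (∃ k : Fin m → ℕ, (∀ i, q i = (k i : ℝ) / n) ∧ ∑ i, k i = n) →
        (1 / n) * (1 - 1 / m) ≤ ‖p - q‖) := by
  have : Nonempty (Fin m) := ⟨⟨0, by omega⟩⟩
  refine ⟨fun p hp hsum => ?_, ?_⟩
  · obtain ⟨k, hk, hnorm⟩ := exists_type_norm_sub_le hn hp hsum
    exact ⟨_, ⟨k, fun i => rfl, hk⟩, by simpa using hnorm⟩
  · obtain ⟨p, hp, hsum, hfar⟩ := exists_forall_le_norm_sub_type (ι := Fin m) hn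
    refine ⟨p, hp, hsum, fun q ⟨k, hq, hk⟩ => ?_⟩
    obtain rfl : q = fun i => (k i : ℝ) / n := funext hq
    simpa using hfar k hk
end

section
/- For every p ∈ Ω_m and n ≥ 1 there exists q ∈ Q_n with ‖p − q‖_2 ≤ (1/n)·√(a(m−a)/m), where a = ⌊m/2⌋. -/
/-! Scale `p` by `n` and round every coordinate down; the fractional parts then sum to an integer
`d ≤ m`, and rounding up the `d` coordinates with the largest fractional parts gives a point of
`Q_n`. Thresholding at the `d`-th largest fractional part bounds the squared rounding error by
`d (m - d) / m`, and over integers `d` the product `d (m - d)` is largest at `d = ⌊m/2⌋`. -/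

open Finset

section Selection

variable {ι α : Type*} [Fintype ι] [DecidableEq ι] [LinearOrder α]

theorem exists_card_eq_forall_notMem_le (f : ι → α) :
    ∀ d ≤ Fintype.card ι, ∃ T : Finset ι, #T = d ∧ ∀ i ∈ T, ∀ j ∉ T, f j ≤ f i
  | 0, _ => ⟨∅, rfl, by simp⟩
  | d + 1, hd => by
    obtain ⟨T, hT, hle⟩ := exists_card_eq_forall_notMem_le f d (by omega)
    have hne : Tᶜ.Nonempty := by
      rw [← card_pos, card_compl]
      omega
    obtain ⟨j, hj, hmax⟩ := exists_max_image Tᶜ f hne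
    have hjT : j ∉ T := mem_compl.mp hj
    refine ⟨insert j T, by rw [card_insert_of_notMem hjT, hT], ?_⟩
    intro i hi k hk
    rw [mem_insert, not_or] at hk
    rcases mem_insert.mp hi with rfl | hiT
    · exact hmax k (mem_compl.mpr hk.2)
    · exact hle i hiT k hk.2

theorem exists_card_eq_threshold [Nonempty α] (f : ι → α) {d : ℕ} (hd : d ≤ Fintype.card ι) :
    ∃ (T : Finset ι) (t : α), #T = d ∧ (∀ i ∈ T, t ≤ f i) ∧ ∀ j ∉ T, f j ≤ t := by
  obtain ⟨T, hT, hle⟩ := exists_card_eq_forall_notMem_le f d hd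
  refine ⟨T, ?_⟩
  rcases T.eq_empty_or_nonempty with rfl | hne
  · obtain ⟨t, ht⟩ := (Set.finite_range f).bddAbove
    exact ⟨t, hT, by simp, fun j _ => ht (Set.mem_range_self j)⟩
  · exact ⟨T.inf' hne f, hT, fun i hi => inf'_le f hi,
      fun j hj => le_inf' hne f fun i hi => hle i hi j hj⟩

end Selection

theorem Nat.cast_mul_sub_le_half_mul_sub {R : Type*} [CommRing R] [LinearOrder R]
    [IsStrictOrderedRing R] (m d : ℕ) :
    (d : R) * (m - d) ≤ (m / 2 : ℕ) * (m - (m / 2 : ℕ)) := by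
  have key : 0 ≤ ((m / 2 : ℕ) - d : R) * (m - (m / 2 : ℕ) - d) := by
    rcases le_or_gt d (m / 2) with h | h
    · have h1 : (d : R) ≤ (m / 2 : ℕ) := by exact_mod_cast h
      have h2 : 2 * ((m / 2 : ℕ) : R) ≤ m := by exact_mod_cast Nat.mul_div_le m 2
      nlinarith
    · have h1 : ((m / 2 : ℕ) : R) + 1 ≤ d := by exact_mod_cast h
      have h2 : (m : R) ≤ 2 * ((m / 2 : ℕ) : R) + 1 := by
        exact_mod_cast (by omega : m ≤ 2 * (m / 2) + 1)
      nlinarith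
  nlinarith

section Rounding

variable {ι R : Type*} [Fintype ι] [DecidableEq ι] [CommRing R] [LinearOrder R]
  [IsStrictOrderedRing R]

/- With `S = ∑_{Tᶜ} x = ∑_T (1 - x)`, the squared errors are at most `(1 - t)(1 - x i)` on `T`
and `t x i` off `T`, so their sum is at most `S`; and `S ≤ t (m - d)`, `S ≤ (1 - t) d` give
`m S ≤ d (m - d)`. -/
theorem card_mul_sum_sq_sub_indicator_le (x : ι → R) (hx0 : ∀ i, 0 ≤ x i) (hx1 : ∀ i, x i ≤ 1)
    (T : Finset ι) (hsum : ∑ i, x i = #T) (t : R)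
    (hT : ∀ i ∈ T, t ≤ x i) (hTc : ∀ j ∉ T, x j ≤ t) :
    (Fintype.card ι : R) * ∑ i, (x i - if i ∈ T then 1 else 0) ^ 2
      ≤ #T * (Fintype.card ι - #T) := by
  set S := ∑ i ∈ Tᶜ, x i
  have hS_eq : ∑ i ∈ T, (1 - x i) = S := by
    have := sum_add_sum_compl T x
    rw [sum_sub_distrib, sum_const, nsmul_one]
    linarith
  have hcard : (#Tᶜ : R) = Fintype.card ι - #T := by
    rw [card_compl, Nat.cast_sub (card_le_univ T)]
  have hS_compl : S ≤ t * (Fintype.card ι - #T) := by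
    calc S ≤ ∑ _i ∈ Tᶜ, t := sum_le_sum fun j hj => hTc j (mem_compl.mp hj)
      _ = t * (Fintype.card ι - #T) := by rw [sum_const, nsmul_eq_mul, hcard, mul_comm]
  have hS_T : S ≤ (1 - t) * #T := by
    calc S = ∑ i ∈ T, (1 - x i) := hS_eq.symm
      _ ≤ ∑ _i ∈ T, (1 - t) := sum_le_sum fun i hi => by linarith [hT i hi]
      _ = (1 - t) * #T := by rw [sum_const, nsmul_eq_mul, mul_comm]
  have hsq : ∑ i, (x i - if i ∈ T then 1 else 0) ^ 2 ≤ S := by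
    calc ∑ i, (x i - if i ∈ T then 1 else 0) ^ 2
        ≤ ∑ i, if i ∈ T then (1 - t) * (1 - x i) else t * x i := by
          refine sum_le_sum fun i _ => ?_
          split_ifs with hi
          · nlinarith [hT i hi, hx1 i]
          · nlinarith [hTc i hi, hx0 i]
      _ = (1 - t) * ∑ i ∈ T, (1 - x i) + t * S := by
          rw [sum_ite, filter_mem_eq_inter, univ_inter, filter_not, filter_mem_eq_inter,
            univ_inter, ← compl_eq_univ_sdiff, mul_sum, mul_sum]
      _ = S := by rw [hS_eq]; ring
  have hT_le : (#T : R) ≤ Fintype.card ι := by exact_mod_cast card_le_univ T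
  nlinarith [hsq, Nat.cast_nonneg (α := R) #T]

theorem exists_card_eq_card_mul_sum_sq_sub_indicator_le (x : ι → R) (hx0 : ∀ i, 0 ≤ x i)
    (hx1 : ∀ i, x i ≤ 1) (d : ℕ) (hsum : ∑ i, x i = d) :
    ∃ T : Finset ι, #T = d ∧
      (Fintype.card ι : R) * ∑ i, (x i - if i ∈ T then 1 else 0) ^ 2
        ≤ d * (Fintype.card ι - d) := by
  have hd : d ≤ Fintype.card ι := by
    have : (d : R) ≤ Fintype.card ι := by
      calc (d : R) = ∑ i, x i := hsum.symm
        _ ≤ ∑ _i : ι, (1 : R) := sum_le_sum fun i _ => hx1 i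
        _ = Fintype.card ι := by simp
    exact_mod_cast this
  obtain ⟨T, t, rfl, hT, hTc⟩ := exists_card_eq_threshold x hd
  exact ⟨T, rfl, card_mul_sum_sq_sub_indicator_le x hx0 hx1 T hsum t hT hTc⟩

theorem exists_nat_sum_eq_card_mul_sum_sq_sub_le [FloorSemiring R] (w : ι → R)
    (hw0 : ∀ i, 0 ≤ w i) (n : ℕ) (hw : ∑ i, w i = n) :
    ∃ k : ι → ℕ, ∑ i, k i = n ∧
      (Fintype.card ι : R) * ∑ i, (w i - k i) ^ 2
        ≤ (Fintype.card ι / 2 : ℕ) * (Fintype.card ι - (Fintype.card ι / 2 : ℕ)) := by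
  set g : ι → ℕ := fun i => ⌊w i⌋₊
  have hg_le : ∀ i, (g i : R) ≤ w i := fun i => Nat.floor_le (hw0 i)
  have hg_sum : ∑ i, g i ≤ n := by
    have : ((∑ i, g i : ℕ) : R) ≤ n := by
      push_cast
      exact hw ▸ sum_le_sum fun i _ => hg_le i
    exact_mod_cast this
  have hfrac_sum : ∑ i, (w i - g i) = (n - ∑ i, g i : ℕ) := by
    rw [sum_sub_distrib, hw, Nat.cast_sub hg_sum, Nat.cast_sum]
  obtain ⟨T, hT, hbound⟩ := exists_card_eq_card_mul_sum_sq_sub_indicator_le (fun i => w i - g i)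
    (fun i => sub_nonneg.mpr (hg_le i))
    (fun i => by linarith [Nat.lt_floor_add_one (w i)]) _ hfrac_sum
  refine ⟨fun i => g i + if i ∈ T then 1 else 0, ?_, ?_⟩
  · rw [sum_add_distrib, sum_boole, filter_mem_eq_inter, univ_inter, hT, Nat.cast_id]
    omega
  · calc (Fintype.card ι : R) * ∑ i, (w i - ((g i + if i ∈ T then 1 else 0 : ℕ) : R)) ^ 2
        = (Fintype.card ι : R) * ∑ i, (w i - g i - if i ∈ T then 1 else 0) ^ 2 := by
          congr 1
          refine sum_congr rfl fun i _ => ?_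
          push_cast
          ring
      _ ≤ _ := hbound.trans (Nat.cast_mul_sub_le_half_mul_sub _ _)

end Rounding

theorem type_lattice_covering_radius_L2_general (m n : ℕ) (hn : 1 ≤ n)
    (p : Fin m → ℝ) (hp0 : ∀ i, 0 ≤ p i) (hp1 : ∑ i, p i = 1) :
    ∃ q : Fin m → ℝ,
      (∃ k : Fin m → ℕ, (∀ i, q i = (k i : ℝ) / n) ∧ ∑ i, k i = n) ∧
      Real.sqrt (∑ i, (p i - q i) ^ 2) ≤
        (1 / n) * Real.sqrt ((m / 2 : ℕ) * (m - (m / 2 : ℕ)) / m) := by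
  have hm : (0 : ℝ) < m := by
    rcases Nat.eq_zero_or_pos m with rfl | hm
    · simp at hp1
    · exact_mod_cast hm
  have hn' : (0 : ℝ) < n := by exact_mod_cast hn
  obtain ⟨k, hk, hbound⟩ := exists_nat_sum_eq_card_mul_sum_sq_sub_le (fun i => n * p i)
    (fun i => mul_nonneg hn'.le (hp0 i)) n (by rw [← mul_sum, hp1, mul_one])
  rw [Fintype.card_fin] at hbound
  refine ⟨fun i => k i / n, ⟨k, fun _ => rfl, hk⟩, ?_⟩
  have hscale : ∑ i, (p i - k i / n) ^ 2 = (1 / n) ^ 2 * ∑ i, (n * p i - k i) ^ 2 := by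
    rw [mul_sum]
    refine sum_congr rfl fun i _ => ?_
    field_simp
  rw [← Real.sqrt_sq (by positivity : (0 : ℝ) ≤ 1 / n), ← Real.sqrt_mul (by positivity), hscale]
  gcongr
  rwa [le_div_iff₀ hm, mul_comm]

/-- L2 covering bound for the type lattice: every `p ∈ Ω_m` has a type
`q ∈ Q_n` with `‖p − q‖₂ ≤ (1/n)·√(a(m−a)/m)`, where `a = ⌊m/2⌋`. -/
theorem type_lattice_covering_radius_L2 (m n : ℕ) (hm : 2 ≤ m) (hn : 1 ≤ n)
    (p : Fin m → ℝ) (hp0 : ∀ i, 0 ≤ p i) (hp1 : ∑ i, p i = 1) :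
    ∃ q : Fin m → ℝ,
      (∃ k : Fin m → ℕ, (∀ i, q i = (k i : ℝ) / n) ∧ ∑ i, k i = n) ∧
      Real.sqrt (∑ i, (p i - q i) ^ 2) ≤
        (1 / n) * Real.sqrt ((m / 2 : ℕ) * (m - (m / 2 : ℕ)) / m) :=
  type_lattice_covering_radius_L2_general m n hn p hp0 hp1
end
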